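/- Let G = (V,E,o) be a rooted locally finite graph, n ≥ 4, and G_n = (V_n, E_n) the augmented ball graph (edges of G inside V_n plus complete graph on U_n = V_n \ V_{n-2}). If an X^V-valued random element (Y_v)_{v∈V} is a second-order Markov random field with respect to G, then the restriction (Y_v)_{v∈V_n} is a second-order Markov random field with respect to G_n. -/

import Mathlib

open MeasureTheory ProbabilityTheory

section GraphDefs

variable {V : Type*}

/-- The (first) outer boundary of a set of vertices. -/
def graphBdry (G : SimpleGraph V) (A : Set V) : Set V :=
  {u | u ∉ A ∧ ∃ v ∈ A, G.Adj u v}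

/-- The second (double) boundary of a set of vertices. -/
def graphBdry2 (G : SimpleGraph V) (A : Set V) : Set V :=
  graphBdry G A ∪ graphBdry G (A ∪ graphBdry G A)

/-- The square graph: vertices at graph distance 1 or 2 are joined. -/
def sqGraph (G : SimpleGraph V) : SimpleGraph V where
  Adj u v := u ≠ v ∧ G.Reachable u v ∧ G.dist u v ≤ 2
  symm := by
    constructor
    rintro u v ⟨h1, h2, h3⟩
    exact ⟨h1.symm, h2.symm, by rwa [SimpleGraph.dist_comm]⟩
  loopless := by constructor; rintro u ⟨h, -⟩; exact h rfl

/-- A 2-clique: a set of vertices of diameter at most 2. -/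
def TwoClique (G : SimpleGraph V) (K : Set V) : Prop :=
  ∀ u ∈ K, ∀ v ∈ K, u ≠ v → G.Reachable u v ∧ G.dist u v ≤ 2

open scoped Classical in
/-- The finite collection of 2-cliques of a graph on a finite vertex set. -/
noncomputable def cl2Finset (G : SimpleGraph V) [Fintype V] : Finset (Finset V) :=
  Finset.univ.filter fun K => TwoClique G (K : Set V)

end GraphDefs

section MRFDefs

variable {V Ω X : Type*} [MeasurableSpace Ω] [StandardBorelSpace Ω] [Nonempty Ω]
  [MeasurableSpace X]

/-- `Y_A` and `Y_B` are conditionally independent given `Y_S`. -/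
def CondIndepCoords (Y : V → Ω → X) (hY : ∀ v, Measurable (Y v)) (μ : Measure Ω)
    [IsFiniteMeasure μ] (A B S : Set V) : Prop :=
  CondIndepFun
    (MeasurableSpace.comap (fun ω => (fun v : S => Y v ω)) MeasurableSpace.pi)
    ((measurable_pi_iff.mpr fun v : S => hY v).comap_le)
    (fun ω => (fun v : A => Y v ω)) (fun ω => (fun v : B => Y v ω)) μ

/-- First-order Markov random field property on a vertex subset `W`. -/
def IsMRF1On (G : SimpleGraph V) (Y : V → Ω → X) (hY : ∀ v, Measurable (Y v))
    (μ : Measure Ω) [IsFiniteMeasure μ] (W : Set V) : Prop :=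
  ∀ A : Set V, A.Finite → A ⊆ W →
    CondIndepCoords Y hY μ A (W \ (A ∪ graphBdry G A)) (graphBdry G A)

/-- Second-order Markov random field property on a vertex subset `W`. -/
def IsMRF2On (G : SimpleGraph V) (Y : V → Ω → X) (hY : ∀ v, Measurable (Y v))
    (μ : Measure Ω) [IsFiniteMeasure μ] (W : Set V) : Prop :=
  ∀ A : Set V, A.Finite → A ⊆ W →
    CondIndepCoords Y hY μ A (W \ (A ∪ graphBdry2 G A)) (graphBdry2 G A)

end MRFDefs

/-- The ball of radius `n` around the root `o` in `G`. -/
def gball {V : Type*} (G : SimpleGraph V) (o : V) (n : ℕ) : Set V :=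
  {v | G.Reachable o v ∧ G.dist o v ≤ n}

/-- The augmented ball graph `G_n`: the edges of `G` inside the ball `V_n` of radius `n`
about the root, together with all pairs of distinct vertices of the annulus
`U_n = V_n \ V_{n-2}`. -/
def augGraph {V : Type*} (G : SimpleGraph V) (o : V) (n : ℕ) : SimpleGraph V where
  Adj u v := (u ∈ gball G o n ∧ v ∈ gball G o n ∧ G.Adj u v) ∨
    (u ∈ gball G o n \ gball G o (n - 2) ∧ v ∈ gball G o n \ gball G o (n - 2) ∧ u ≠ v)
  symm := by
    constructor
    rintro u v (⟨h1, h2, h3⟩ | ⟨h1, h2, h3⟩)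
    · exact Or.inl ⟨h2, h1, h3.symm⟩
    · exact Or.inr ⟨h2, h1, h3.symm⟩
  loopless := by
    constructor
    rintro u (⟨-, -, h⟩ | ⟨-, -, h⟩)
    · exact G.loopless.irrefl u h
    · exact h rfl

/-! Fix a finite `A ⊆ V_n` and put `S = ∂²_{G_n} A`, `B = V_n \ (A ∪ S)`. Since the annulus
`U_n` is a clique of `G_n`, either `A ⊆ V_{n-2}` or `B ⊆ V_{n-2}`. For `K ⊆ V_{n-2}` every `G`-edge
at `K ∪ ∂_G K` stays inside `V_n`, so `∂²_G K ⊆ ∂²_{G_n} K`; and separation at distance three is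
symmetric. Hence the Markov property of `Y` on `G`, applied to `K = A` or to `K = B`, yields
`Y_K ⫫ Y_{V \ (K ∪ ∂²_G K)} | Y_{∂²_G K}` with `∂²_G K ⊆ S`, and weak union of conditional independence moves
the remaining vertices of `S` into the conditioning. -/

namespace MeasurableSpace

variable {α : Type*}

theorem sup_eq_generateFrom_image2_inter (m₁ m₂ : MeasurableSpace α) :
    m₁ ⊔ m₂ = generateFrom (Set.image2 (· ∩ ·) {s | MeasurableSet[m₁] s}
      {t | MeasurableSet[m₂] t}) := by
  refine le_antisymm (sup_le ?_ ?_) (generateFrom_le ?_)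
  · exact fun s hs ↦ measurableSet_generateFrom ⟨s, hs, Set.univ, .univ, Set.inter_univ s⟩
  · exact fun t ht ↦ measurableSet_generateFrom ⟨Set.univ, .univ, t, ht, Set.univ_inter t⟩
  · rintro _ ⟨s, hs, t, ht, rfl⟩
    exact (le_sup_left (b := m₂) _ hs).inter (le_sup_right (a := m₁) _ ht)

theorem isPiSystem_image2_inter (m₁ m₂ : MeasurableSpace α) :
    IsPiSystem (Set.image2 (· ∩ ·) {s | MeasurableSet[m₁] s} {t | MeasurableSet[m₂] t}) := by
  rintro _ ⟨s₁, hs₁, t₁, ht₁, rfl⟩ _ ⟨s₂, hs₂, t₂, ht₂, rfl⟩ -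
  exact ⟨s₁ ∩ s₂, hs₁.inter hs₂, t₁ ∩ t₂, ht₁.inter ht₂, Set.inter_inter_inter_comm _ _ _ _⟩

end MeasurableSpace

theorem Set.indicator_eq_mul_indicator_one {α M : Type*} [MulZeroOneClass M] (s : Set α)
    (f : α → M) : s.indicator f = f * s.indicator 1 := by
  ext a; by_cases ha : a ∈ s <;> simp [ha]

namespace ProbabilityTheory

variable {Ω : Type*} {m' m₁ m₂ m₃ : MeasurableSpace Ω} [mΩ : MeasurableSpace Ω]
  [StandardBorelSpace Ω] {μ : Measure Ω} [IsFiniteMeasure μ]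

theorem condExp_sup_ae_eq_of_condIndep (hm' : m' ≤ mΩ) (hm₁ : m₁ ≤ mΩ) (hm₂ : m₂ ≤ mΩ)
    (h : CondIndep m' m₁ m₂ hm' μ) {s : Set Ω} (hs : MeasurableSet[m₁] s) :
    μ⟦s | m' ⊔ m₂⟧ =ᵐ[μ] μ⟦s | m'⟧ := by
  have hsΩ := hm₁ _ hs
  have hsup : m' ⊔ m₂ ≤ mΩ := sup_le hm' hm₂
  have hs_int : Integrable (s.indicator fun _ ↦ (1 : ℝ)) μ := (integrable_const 1).indicator hsΩ
  have key : ∀ x, MeasurableSet[m' ⊔ m₂] x →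
      ∫ ω in x, (μ⟦s | m'⟧) ω ∂μ = ∫ ω in x, s.indicator (fun _ ↦ (1 : ℝ)) ω ∂μ := by
    refine MeasurableSpace.induction_on_inter (MeasurableSpace.sup_eq_generateFrom_image2_inter
      m' m₂) (MeasurableSpace.isPiSystem_image2_inter m' m₂) (by simp) ?_ ?_ ?_
    · rintro _ ⟨c, hc, t, ht, rfl⟩
      have htΩ := hm₂ _ ht
      have h_mul := t.indicator_eq_mul_indicator_one (μ⟦s | m'⟧)
      calc ∫ ω in c ∩ t, (μ⟦s | m'⟧) ω ∂μ
          = ∫ ω in c, t.indicator (μ⟦s | m'⟧) ω ∂μ := (setIntegral_indicator htΩ).symm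
        _ = ∫ ω in c, μ[t.indicator (μ⟦s | m'⟧) | m'] ω ∂μ :=
            (setIntegral_condExp hm' (integrable_condExp.indicator htΩ) hc).symm
        _ = ∫ ω in c, (μ⟦s ∩ t | m'⟧) ω ∂μ := by
            refine integral_congr_ae (ae_restrict_of_ae ?_)
            rw [h_mul]
            refine (condExp_mul_of_stronglyMeasurable_left stronglyMeasurable_condExp
              (h_mul ▸ integrable_condExp.indicator htΩ)
              ((integrable_const 1).indicator htΩ)).trans ?_
            exact ((condIndep_iff _ _ _ hm' hm₁ hm₂ μ).1 h s t hs ht).symm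
        _ = ∫ ω in c, (s ∩ t).indicator (fun _ ↦ (1 : ℝ)) ω ∂μ :=
            setIntegral_condExp hm' ((integrable_const 1).indicator (hsΩ.inter htΩ)) hc
        _ = ∫ ω in c ∩ t, s.indicator (fun _ ↦ (1 : ℝ)) ω ∂μ := by
            rw [← setIntegral_indicator htΩ, Set.indicator_indicator, Set.inter_comm]
    · intro t ht h_eq
      have htΩ := hsup _ ht
      have h_univ : ∫ ω, (μ⟦s | m'⟧) ω ∂μ = ∫ ω, s.indicator (fun _ ↦ (1 : ℝ)) ω ∂μ :=
        integral_condExp hm'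
      rw [← integral_add_compl htΩ integrable_condExp, ← integral_add_compl htΩ hs_int,
        h_eq] at h_univ
      linarith
    · intro t hdisj ht h_eq
      rw [integral_iUnion (fun i ↦ hsup _ (ht i)) hdisj integrable_condExp.integrableOn,
        integral_iUnion (fun i ↦ hsup _ (ht i)) hdisj hs_int.integrableOn]
      exact tsum_congr h_eq
  exact (ae_eq_condExp_of_forall_setIntegral_eq hsup hs_int
    (fun _ _ _ ↦ integrable_condExp.integrableOn) (fun t ht _ ↦ key t ht)
    (stronglyMeasurable_condExp.mono (le_sup_left : m' ≤ m' ⊔ m₂)).aestronglyMeasurable).symm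

theorem CondIndep.weak_union (hm' : m' ≤ mΩ) (hm₁ : m₁ ≤ mΩ) (hm₂ : m₂ ≤ mΩ)
    (hm₃ : m₃ ≤ mΩ) (h : CondIndep m' m₁ (m₂ ⊔ m₃) hm' μ) :
    CondIndep (m' ⊔ m₃) m₁ m₂ (sup_le hm' hm₃) μ := by
  rw [condIndep_iff _ _ _ _ hm₁ hm₂]
  intro s u hs hu
  have h_sup := condExp_sup_ae_eq_of_condIndep hm' hm₁ (sup_le hm₂ hm₃) h hs
  have h_sup₃ := condExp_sup_ae_eq_of_condIndep hm' hm₁ hm₃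
    (condIndep_of_condIndep_of_le_right h le_sup_right) hs
  have huΩ := hm₂ _ hu
  have h_mul := u.indicator_eq_mul_indicator_one (μ⟦s | m'⟧)
  calc μ⟦s ∩ u | m' ⊔ m₃⟧
      =ᵐ[μ] μ[μ⟦s ∩ u | m' ⊔ (m₂ ⊔ m₃)⟧ | m' ⊔ m₃] :=
        (condExp_condExp_of_le (sup_le_sup_left le_sup_right m') (sup_le hm' (sup_le hm₂ hm₃))).symm
    _ =ᵐ[μ] μ[u.indicator (μ⟦s | m'⟧) | m' ⊔ m₃] := by
        refine condExp_congr_ae ?_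
        rw [Set.inter_comm, ← Set.indicator_indicator]
        refine (condExp_indicator ((integrable_const 1).indicator (hm₁ _ hs))
          ((le_sup_of_le_right le_sup_left : m₂ ≤ m' ⊔ (m₂ ⊔ m₃)) _ hu)).trans ?_
        filter_upwards [h_sup] with ω hω
        simp only [Set.indicator, hω]
    _ =ᵐ[μ] μ⟦s | m'⟧ * μ⟦u | m' ⊔ m₃⟧ := by
        rw [h_mul]
        exact condExp_mul_of_stronglyMeasurable_left
          (stronglyMeasurable_condExp.mono le_sup_left)
          (h_mul ▸ integrable_condExp.indicator huΩ) ((integrable_const 1).indicator huΩ)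
    _ =ᵐ[μ] μ⟦s | m' ⊔ m₃⟧ * μ⟦u | m' ⊔ m₃⟧ := by
        filter_upwards [h_sup₃] with ω hω
        simp only [Pi.mul_apply, hω]

end ProbabilityTheory

section Coordinates

variable {V Ω X : Type*} [mX : MeasurableSpace X]

theorem comap_coords_eq_iSup (Y : V → Ω → X) (S : Set V) :
    MeasurableSpace.comap (fun ω (v : S) ↦ Y v ω) MeasurableSpace.pi
      = ⨆ v ∈ S, mX.comap (Y v) := by
  simp_rw [MeasurableSpace.pi, MeasurableSpace.comap_iSup, MeasurableSpace.comap_comp]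
  exact iSup_subtype

theorem comap_coords_mono (Y : V → Ω → X) {S T : Set V} (h : S ⊆ T) :
    MeasurableSpace.comap (fun ω (v : S) ↦ Y v ω) MeasurableSpace.pi
      ≤ MeasurableSpace.comap (fun ω (v : T) ↦ Y v ω) MeasurableSpace.pi := by
  simp_rw [comap_coords_eq_iSup]
  exact biSup_mono h

variable [MeasurableSpace Ω] [StandardBorelSpace Ω] {Y : V → Ω → X}
  {hY : ∀ v, Measurable (Y v)} {μ : Measure Ω} [IsFiniteMeasure μ]

theorem CondIndepCoords.symm {A B S : Set V} (h : CondIndepCoords Y hY μ A B S) :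
    CondIndepCoords Y hY μ B A S :=
  CondIndepFun.symm h

theorem CondIndepCoords.weak_union {A B C D S : Set V} (h : CondIndepCoords Y hY μ A C D)
    (hBC : B ⊆ C) (hSC : S \ D ⊆ C) (hDS : D ⊆ S) : CondIndepCoords Y hY μ A B S := by
  have hmeas : ∀ W : Set V, Measurable fun ω (v : W) ↦ Y v ω :=
    fun W ↦ measurable_pi_iff.mpr fun v ↦ hY v
  unfold CondIndepCoords at h ⊢
  rw [condIndepFun_iff_condIndep] at h ⊢
  have h' := (condIndep_of_condIndep_of_le_right h (sup_le (comap_coords_mono Y hBC)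
    (comap_coords_mono Y hSC))).weak_union _ (hmeas A).comap_le (hmeas B).comap_le
    (hmeas (S \ D)).comap_le
  convert h' using 2
  rw [comap_coords_eq_iSup, comap_coords_eq_iSup, comap_coords_eq_iSup, ← iSup_union,
    Set.union_sdiff_cancel hDS]

theorem IsMRF2On.condIndepCoords {G : SimpleGraph V} (hMRF : IsMRF2On G Y hY μ Set.univ)
    {K L S : Set V} (hK : K.Finite) (hKS : graphBdry2 G K ⊆ S) (hSK : Disjoint S K)
    (hL : Disjoint L (K ∪ S)) : CondIndepCoords Y hY μ K L S := by
  refine (hMRF K hK (Set.subset_univ K)).weak_union ?_ ?_ hKS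
  · exact fun u hu ↦ ⟨trivial, fun h ↦ Set.disjoint_left.1 hL hu (h.imp_right (@hKS u))⟩
  · exact fun u hu ↦ ⟨trivial, fun h ↦ h.elim (Set.disjoint_left.1 hSK hu.1) hu.2⟩

end Coordinates

section Boundary

variable {V : Type*} {H H' : SimpleGraph V} {A B D : Set V}

theorem disjoint_graphBdry2_self : Disjoint (graphBdry2 H A) A :=
  Set.disjoint_left.2 fun _ hu hA ↦ hu.elim (fun h ↦ h.1 hA) fun h ↦ h.1 (Or.inl hA)

theorem graphBdry_subset_of_adj (h : ∀ u v, v ∈ A → H.Adj u v → H'.Adj u v) :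
    graphBdry H A ⊆ graphBdry H' A :=
  fun u ⟨huA, v, hv, huv⟩ ↦ ⟨huA, v, hv, h u v hv huv⟩

theorem graphBdry_union_subset_graphBdry2 (hD : D ⊆ graphBdry H A) :
    graphBdry H (A ∪ D) ⊆ graphBdry2 H A := by
  rintro u ⟨huAD, v, hv, huv⟩
  by_cases hu : u ∈ graphBdry H A
  · exact Or.inl hu
  · refine Or.inr ⟨?_, v, hv.imp_right (@hD v), huv⟩
    rintro (h | h)
    exacts [huAD (Or.inl h), hu h]

theorem graphBdry2_subset_of_adj (h : ∀ u v, v ∈ A ∪ graphBdry H A → H.Adj u v → H'.Adj u v) :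
    graphBdry2 H A ⊆ graphBdry2 H' A := by
  have h₁ : graphBdry H A ⊆ graphBdry H' A :=
    graphBdry_subset_of_adj fun u v hv ↦ h u v (Or.inl hv)
  rintro u (hu | hu)
  · exact Or.inl (h₁ hu)
  · exact graphBdry_union_subset_graphBdry2 h₁ (graphBdry_subset_of_adj h hu)

/-- Being at distance at least three is symmetric. -/
theorem disjoint_union_graphBdry2_comm (h : Disjoint B (A ∪ graphBdry2 H A)) :
    Disjoint A (B ∪ graphBdry2 H B) := by
  have hB : ∀ b ∈ B, ∀ w, H.Adj b w → w ∉ A ∪ graphBdry H A := by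
    intro b hb w hbw hw
    have hb' : b ∉ A ∪ graphBdry H A := fun hb' ↦
      Set.disjoint_left.1 h hb (hb'.imp_right Or.inl)
    exact Set.disjoint_left.1 h hb (Or.inr (Or.inr ⟨hb', w, hw, hbw⟩))
  have hA : ∀ a ∈ A, ∀ w, H.Adj w a → w ∈ A ∪ graphBdry H A := fun a ha w hwa ↦
    (em (w ∈ A)).imp id fun hw ↦ ⟨hw, a, ha, hwa⟩
  refine Set.disjoint_left.2 fun a ha ↦ ?_
  rintro (haB | ⟨-, b, hb, hab⟩ | ⟨-, w, hw | ⟨-, b, hb, hwb⟩, haw⟩)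
  · exact Set.disjoint_left.1 h haB (Or.inl ha)
  · exact hB b hb a hab.symm (Or.inl ha)
  · exact hB w hw a haw.symm (Or.inl ha)
  · exact hB b hb w hwb.symm (hA a ha w haw.symm)

end Boundary

theorem SimpleGraph.finite_setOf_exists_walk_length_le {V : Type*} (G : SimpleGraph V)
    [G.LocallyFinite] (k : ℕ) (x : V) : {v | ∃ p : G.Walk x v, p.length ≤ k}.Finite := by
  induction k generalizing x with
  | zero =>
    refine (Set.finite_singleton x).subset ?_
    rintro v ⟨p, hp⟩
    exact (SimpleGraph.Walk.eq_of_length_eq_zero (Nat.le_zero.mp hp)).symm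
  | succ k ih =>
    refine ((Set.finite_singleton x).union
      ((G.neighborSet x).toFinite.biUnion fun u _ ↦ ih u)).subset ?_
    rintro v ⟨_ | ⟨h, q⟩, hp⟩
    · exact Or.inl rfl
    · exact Or.inr (Set.mem_biUnion h ⟨q, by simpa using hp⟩)

section Ball

variable {V : Type*} {G : SimpleGraph V} {o : V} {m n : ℕ} {A K : Set V}

theorem gball_finite [G.LocallyFinite] : (gball G o n).Finite := by
  refine (G.finite_setOf_exists_walk_length_le n o).subset ?_
  rintro v ⟨hr, hd⟩
  obtain ⟨p, hp⟩ := hr.exists_walk_length_eq_dist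
  exact ⟨p, hp ▸ hd⟩

theorem gball_mono (h : m ≤ n) : gball G o m ⊆ gball G o n :=
  fun _ hv ↦ ⟨hv.1, hv.2.trans h⟩

theorem mem_gball_succ_of_adj {u v : V} (hu : u ∈ gball G o m) (h : G.Adj u v) :
    v ∈ gball G o (m + 1) := by
  obtain ⟨p, hp⟩ := hu.1.exists_walk_length_eq_dist
  refine ⟨(p.concat h).reachable, ?_⟩
  calc G.dist o v ≤ (p.concat h).length := SimpleGraph.dist_le _
    _ = G.dist o u + 1 := by rw [SimpleGraph.Walk.length_concat, hp]
    _ ≤ m + 1 := Nat.succ_le_succ hu.2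

theorem graphBdry_subset_gball_succ (hA : A ⊆ gball G o m) : graphBdry G A ⊆ gball G o (m + 1) :=
  fun _ ⟨_, _, hv, huv⟩ ↦ mem_gball_succ_of_adj (hA hv) huv.symm

theorem graphBdry2_augGraph_subset_gball : graphBdry2 (augGraph G o n) K ⊆ gball G o n := by
  have h : ∀ S, graphBdry (augGraph G o n) S ⊆ gball G o n := by
    rintro S u ⟨-, v, -, ⟨hu, -⟩ | ⟨⟨hu, -⟩, -⟩⟩ <;> exact hu
  exact Set.union_subset (h _) (h _)

theorem graphBdry2_subset_graphBdry2_augGraph (hn : 2 ≤ n) (hK : K ⊆ gball G o (n - 2)) :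
    graphBdry2 G K ⊆ graphBdry2 (augGraph G o n) K := by
  have hK₁ : K ∪ graphBdry G K ⊆ gball G o (n - 2 + 1) :=
    Set.union_subset (hK.trans (gball_mono (Nat.le_succ _))) (graphBdry_subset_gball_succ hK)
  refine graphBdry2_subset_of_adj fun u v hv huv ↦ Or.inl ⟨?_, ?_, huv⟩
  · exact gball_mono (by omega) (mem_gball_succ_of_adj (hK₁ hv) huv.symm)
  · exact gball_mono (by omega) (hK₁ hv)

/-- The annulus `V_n \ V_{n-2}` is a clique of `G_n`, so it is swallowed by `A ∪ ∂²A` as soon as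
`A` meets it. -/
theorem gball_diff_augGraph_subset_gball_sub_two (hA : A ⊆ gball G o n) {a : V} (ha : a ∈ A)
    (haU : a ∉ gball G o (n - 2)) :
    gball G o n \ (A ∪ graphBdry2 (augGraph G o n) A) ⊆ gball G o (n - 2) := by
  rintro u ⟨hun, huAS⟩
  by_contra huU
  refine huAS (Or.inr (Or.inl ⟨fun huA ↦ huAS (Or.inl huA), a, ha,
    Or.inr ⟨⟨hun, huU⟩, ⟨hA ha, haU⟩, ?_⟩⟩))
  rintro rfl
  exact huAS (Or.inl ha)

end Ball

theorem isMRF2_restrict_augGraph_general {V Ω X : Type*} [MeasurableSpace Ω] [StandardBorelSpace Ω]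
    [MeasurableSpace X] (G : SimpleGraph V) [G.LocallyFinite] (o : V)
    (n : ℕ) (hn : 4 ≤ n) (Y : V → Ω → X) (hY : ∀ v, Measurable (Y v))
    (μ : Measure Ω) [IsProbabilityMeasure μ]
    (hMRF : IsMRF2On G Y hY μ Set.univ) :
    IsMRF2On (augGraph G o n) Y hY μ (gball G o n) := by
  intro A hA hAn
  set S := graphBdry2 (augGraph G o n) A
  set B := gball G o n \ (A ∪ S)
  have hB : Disjoint B (A ∪ S) := Set.disjoint_sdiff_left
  by_cases hAU : A ⊆ gball G o (n - 2)
  · exact hMRF.condIndepCoords hA (graphBdry2_subset_graphBdry2_augGraph (by omega) hAU)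
      disjoint_graphBdry2_self hB
  obtain ⟨a, ha, haU⟩ := Set.not_subset.1 hAU
  have hBS : graphBdry2 G B ⊆ S := by
    intro u hu
    have huB := graphBdry2_subset_graphBdry2_augGraph (by omega)
      (gball_diff_augGraph_subset_gball_sub_two hAn ha haU) hu
    by_contra huS
    have huA : u ∉ A := fun huA ↦
      Set.disjoint_left.1 (disjoint_union_graphBdry2_comm hB) huA (Or.inr huB)
    exact Set.disjoint_left.1 disjoint_graphBdry2_self hu
      ⟨graphBdry2_augGraph_subset_gball huB, fun h ↦ h.elim huA huS⟩
  exact (hMRF.condIndepCoords (gball_finite.subset Set.sdiff_subset) hBS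
    (hB.symm.mono_left Set.subset_union_right)
    ((hB.symm.mono_left Set.subset_union_left).union_right disjoint_graphBdry2_self.symm)).symm

/-- If `(Y_v)_{v ∈ V}` is a second-order Markov random field with respect to `G`, then the
restriction `(Y_v)_{v ∈ V_n}` is a second-order Markov random field with respect to the
augmented ball graph `G_n`. -/
theorem isMRF2_restrict_augGraph {V Ω X : Type*} [MeasurableSpace Ω] [StandardBorelSpace Ω]
    [Nonempty Ω] [MeasurableSpace X] (G : SimpleGraph V) [G.LocallyFinite] (o : V)
    (n : ℕ) (hn : 4 ≤ n) (Y : V → Ω → X) (hY : ∀ v, Measurable (Y v))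
    (μ : Measure Ω) [IsProbabilityMeasure μ]
    (hMRF : IsMRF2On G Y hY μ Set.univ) :
    IsMRF2On (augGraph G o n) Y hY μ (gball G o n) :=
  isMRF2_restrict_augGraph_general G o n hn Y hY μ hMRF
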